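/- Let A be a uniform algebra on a compact Hausdorff space Ω that is antisymmetric on Ω (every element of A that is real-valued on Ω is a constant function). Suppose f ∈ C(Ω,ℝ) is strictly positive and there exist n ∈ ℕ and elements a₁,…,aₙ, b₁,…,bₙ ∈ A such that Σᵢ aᵢ(w)bᵢ(w) = 1, Σᵢ |aᵢ(w)f(w)|² ≤ 1, and Σᵢ |bᵢ(w)f(w)⁻¹|² ≤ 1 for all w ∈ Ω. Then f ∈ Q, i.e. f = |g| for some invertible g ∈ A. -/

import Mathlib

open Filter

section Preamble

variable {Ω : Type*} [TopologicalSpace Ω] [CompactSpace Ω] [T2Space Ω]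

/-- The evaluation functional at a point `x`, as a continuous linear functional on a
subspace `A` of `C(Ω, ℂ)`. -/
noncomputable def evalFunctional (A : Submodule ℂ C(Ω, ℂ)) (x : Ω) : A →L[ℂ] ℂ :=
  LinearMap.mkContinuous
    { toFun := fun a => (a : C(Ω, ℂ)) x
      map_add' := fun a b => rfl
      map_smul' := fun c a => rfl } 1
    (fun a => le_of_le_of_eq ((a : C(Ω, ℂ)).norm_coe_le_norm x) (one_mul _).symm)

/-- `x` is in the Choquet boundary of the subspace `A ⊆ C(Ω, ℂ)` iff the evaluation
functional at `x` is an extreme point of the closed unit ball of the dual space `A*`. -/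
def InChoquet (A : Submodule ℂ C(Ω, ℂ)) (x : Ω) : Prop :=
  evalFunctional A x ∈ Set.extremePoints ℝ (Metric.closedBall (0 : A →L[ℂ] ℂ) 1)

/-- A real-valued continuous function, viewed as a complex-valued continuous function. -/
noncomputable def ofRealCM (f : C(Ω, ℝ)) : C(Ω, ℂ) :=
  ⟨fun x => (f x : ℂ), Complex.continuous_ofReal.comp f.continuous⟩

/-- The submodule `A·f = {a·f : a ∈ A}` of `C(Ω, ℂ)`. -/
noncomputable def moduleAf (A : Subalgebra ℂ C(Ω, ℂ)) (f : C(Ω, ℝ)) : Submodule ℂ C(Ω, ℂ) :=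
  (Subalgebra.toSubmodule A).map (LinearMap.mulRight ℂ (ofRealCM f))

/-- A map `S` between two `A`-submodules `X, Y` of `C(Ω, ℂ)` is an `A`-module map if
`S(a·x) = a·S(x)` for all `a ∈ A`, `x ∈ X`. -/
def IsModuleMapOn (A : Subalgebra ℂ C(Ω, ℂ)) {X Y : Submodule ℂ C(Ω, ℂ)} (S : X → Y) : Prop :=
  ∀ (a : C(Ω, ℂ)), a ∈ A → ∀ (x : X) (h : a * (x : C(Ω, ℂ)) ∈ X),
    ((S ⟨a * (x : C(Ω, ℂ)), h⟩ : C(Ω, ℂ))) = a * ((S x : C(Ω, ℂ)))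

/-- There is a surjective linear isometry from `X` onto `Y`. -/
def ExistsLinearIsometry (X Y : Submodule ℂ C(Ω, ℂ)) : Prop :=
  ∃ S : X →ₗ[ℂ] Y, Function.Surjective S ∧ ∀ x, ‖S x‖ = ‖x‖

/-- There is a surjective isometric `A`-module isomorphism from `X` onto `Y`. -/
def ExistsModuleIsometry (A : Subalgebra ℂ C(Ω, ℂ)) (X Y : Submodule ℂ C(Ω, ℂ)) : Prop :=
  ∃ S : X →ₗ[ℂ] Y, Function.Surjective S ∧ (∀ x, ‖S x‖ = ‖x‖) ∧ IsModuleMapOn A S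

/-- `X` and `Y` are almost isometric: for every `ε > 0` there is a bijective bounded
linear map `T : X → Y` with `‖T‖·‖T⁻¹‖ < 1 + ε`. -/
def AlmostIsometric (X Y : Submodule ℂ C(Ω, ℂ)) : Prop :=
  ∀ ε : ℝ, 0 < ε → ∃ T : X ≃L[ℂ] Y,
    ‖T.toContinuousLinearMap‖ * ‖T.symm.toContinuousLinearMap‖ < 1 + ε

/-- `X` and `Y` are almost `A`-isometric: for every `ε > 0` there is a bijective bounded
`A`-module map `T : X → Y` with `‖T‖·‖T⁻¹‖ < 1 + ε`. -/
def AlmostAIsometric (A : Subalgebra ℂ C(Ω, ℂ)) (X Y : Submodule ℂ C(Ω, ℂ)) : Prop :=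
  ∀ ε : ℝ, 0 < ε → ∃ T : X ≃L[ℂ] Y, IsModuleMapOn A T ∧
    ‖T.toContinuousLinearMap‖ * ‖T.symm.toContinuousLinearMap‖ < 1 + ε

/-- `f ∈ Q`: `f = |g|` for an invertible element `g` of `A`. -/
def MemQ (A : Subalgebra ℂ C(Ω, ℂ)) (f : C(Ω, ℝ)) : Prop :=
  ∃ g ∈ A, (∃ g' ∈ A, g * g' = 1) ∧ ∀ x, f x = ‖g x‖

/-- `f ∈ Q̄`: `f` is a uniform limit on `Ω` of moduli of invertible elements of `A`. -/
def MemQbar (A : Subalgebra ℂ C(Ω, ℂ)) (f : C(Ω, ℝ)) : Prop :=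
  ∃ g : ℕ → C(Ω, ℂ), (∀ n, g n ∈ A ∧ ∃ g' ∈ A, g n * g' = 1) ∧
    TendstoUniformly (fun n x => ‖g n x‖) (fun x => f x) atTop

/-- `f ∈ 𝓜_A(Ω)`: there are sequences of `A`-tuples `Kₙ`, `Hₙ` with `Kₙ.Hₙ = 1`,
`‖Kₙ(w)‖₂ → f(w)` uniformly, and `‖Hₙ(w)‖₂ → f(w)⁻¹` uniformly on `Ω`. -/
def MemM (A : Subalgebra ℂ C(Ω, ℂ)) (f : C(Ω, ℝ)) : Prop :=
  ∃ (n : ℕ → ℕ) (K H : (m : ℕ) → Fin (n m) → C(Ω, ℂ)),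
    (∀ m i, K m i ∈ A) ∧ (∀ m i, H m i ∈ A) ∧
    (∀ m (x : Ω), (∑ i, K m i x * H m i x) = 1) ∧
    TendstoUniformly (fun m x => Real.sqrt (∑ i, ‖K m i x‖ ^ 2))
      (fun x => f x) atTop ∧
    TendstoUniformly (fun m x => Real.sqrt (∑ i, ‖H m i x‖ ^ 2))
      (fun x => (f x)⁻¹) atTop

/-- The set `𝓕` of finite sums `Σᵢ |gᵢ|²` with `gᵢ ∈ A`. -/
def calF (A : Subalgebra ℂ C(Ω, ℂ)) : Set C(Ω, ℝ) :=
  {u | ∃ (n : ℕ) (g : Fin n → C(Ω, ℂ)), (∀ i, g i ∈ A) ∧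
    ∀ x, u x = ∑ i, ‖g i x‖ ^ 2}

end Preamble

/-!
At each point, `x = a f` and `y = b f⁻¹` lie in the unit ball of `ℂⁿ` and satisfy `∑ xᵢ yᵢ = 1`,
so the equality case of Cauchy–Schwarz forces `b = conj a · f²`. Then every `aᵢ bᵢ = |aᵢ|² f²` is
real-valued, hence a constant `cᵢ` by antisymmetry. Since `∑ cᵢ = 1`, some `c_k ≠ 0`; then `b_k`
is invertible in `A` (with inverse `c_k⁻¹ a_k`) and `|b_k| = √c_k f`.
-/

open ComplexConjugate

/-- Equality case of Cauchy–Schwarz: `∑ ‖xᵢ - conj yᵢ‖² = ∑ ‖xᵢ‖² + ∑ ‖yᵢ‖² - 2 Re ∑ xᵢ yᵢ ≤ 0`. -/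
theorem Complex.eq_conj_of_sum_mul_eq_one {ι : Type*} {s : Finset ι} {x y : ι → ℂ}
    (hxy : ∑ i ∈ s, x i * y i = 1) (hx : ∑ i ∈ s, ‖x i‖ ^ 2 ≤ 1)
    (hy : ∑ i ∈ s, ‖y i‖ ^ 2 ≤ 1) :
    ∀ i ∈ s, y i = conj (x i) := by
  have hexpand : ∀ i, normSq (x i - conj (y i)) = ‖x i‖ ^ 2 + ‖y i‖ ^ 2 - 2 * (x i * y i).re :=
    fun i => by rw [normSq_sub, normSq_conj, conj_conj, normSq_eq_norm_sq, normSq_eq_norm_sq]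
  have hre : ∑ i ∈ s, (x i * y i).re = 1 := by rw [← re_sum, hxy, one_re]
  have hsum : ∑ i ∈ s, normSq (x i - conj (y i)) = 0 := by
    refine le_antisymm ?_ (Finset.sum_nonneg fun i _ => normSq_nonneg _)
    simp only [hexpand, Finset.sum_sub_distrib, Finset.sum_add_distrib, ← Finset.mul_sum, hre]
    linarith
  intro i hi
  have hi0 := normSq_eq_zero.1 <|
    (Finset.sum_eq_zero_iff_of_nonneg fun j _ => normSq_nonneg _).1 hsum i hi
  rw [sub_eq_zero.1 hi0, conj_conj]

theorem Complex.eq_conj_mul_sq_of_sum_mul_eq_one {ι : Type*} {s : Finset ι} {x y : ι → ℂ}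
    {t : ℝ} (ht : t ≠ 0) (hxy : ∑ i ∈ s, x i * y i = 1) (hx : ∑ i ∈ s, ‖x i * t‖ ^ 2 ≤ 1)
    (hy : ∑ i ∈ s, ‖y i * (t : ℂ)⁻¹‖ ^ 2 ≤ 1) :
    ∀ i ∈ s, y i = conj (x i) * (t : ℂ) ^ 2 := by
  have ht' : (t : ℂ) ≠ 0 := ofReal_ne_zero.2 ht
  have hxy' : ∑ i ∈ s, x i * t * (y i * (t : ℂ)⁻¹) = 1 := by
    rw [← hxy]
    exact Finset.sum_congr rfl fun i _ => by field_simp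
  intro i hi
  have := eq_conj_of_sum_mul_eq_one hxy' hx hy i hi
  rw [map_mul, conj_ofReal] at this
  field_simp at this
  linear_combination this

theorem Complex.mul_eq_ofReal_of_eq_conj_mul_sq {z u : ℂ} {t : ℝ}
    (hu : u = conj z * (t : ℂ) ^ 2) : z * u = ((‖z‖ * t) ^ 2 : ℝ) := by
  rw [hu, ← mul_assoc, mul_conj, normSq_eq_norm_sq]
  push_cast
  ring

theorem Complex.norm_eq_sqrt_mul_of_eq_conj_mul_sq {z u c : ℂ} {t : ℝ} (ht : 0 ≤ t)
    (hu : u = conj z * (t : ℂ) ^ 2) (hc : z * u = c) : ‖u‖ = √‖c‖ * t := by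
  rw [← hc, mul_eq_ofReal_of_eq_conj_mul_sq hu, norm_real, Real.norm_eq_abs, abs_sq,
    Real.sqrt_sq (by positivity), hu]
  simp only [norm_mul, RCLike.norm_conj, norm_pow, norm_real, Real.norm_eq_abs, abs_of_nonneg ht]
  ring

theorem memQ_of_mul_eq_const {Ω : Type*} [TopologicalSpace Ω] {A : Subalgebra ℂ C(Ω, ℂ)}
    {f : C(Ω, ℝ)} {a b : C(Ω, ℂ)} (ha : a ∈ A) (hb : b ∈ A) {c : ℂ} (hc : c ≠ 0)
    (hab : ∀ w, a w * b w = c) {r : ℝ} (hr : 0 < r) (hbf : ∀ w, ‖b w‖ = r * f w) :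
    MemQ A f := by
  have hr' : (r : ℂ) ≠ 0 := Complex.ofReal_ne_zero.2 hr.ne'
  refine ⟨(r : ℂ)⁻¹ • b, A.smul_mem hb _, ⟨((r : ℂ) / c) • a, A.smul_mem ha _, ?_⟩, fun w => ?_⟩
  · ext w
    simp only [ContinuousMap.mul_apply, ContinuousMap.smul_apply, smul_eq_mul,
      ContinuousMap.one_apply]
    field_simp
    linear_combination hab w
  · rw [ContinuousMap.smul_apply, norm_smul, hbf, norm_inv, Complex.norm_real, Real.norm_eq_abs,
      abs_of_pos hr, inv_mul_cancel_left₀ hr.ne']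

theorem stmt_16_general {Ω : Type*} [TopologicalSpace Ω]
    (A : Subalgebra ℂ C(Ω, ℂ))
    (hanti : ∀ a ∈ A, (∀ x : Ω, (a x).im = 0) → ∃ c : ℂ, ∀ x : Ω, a x = c)
    (f : C(Ω, ℝ)) (hf : ∀ x, 0 < f x)
    (n : ℕ) (a b : Fin n → C(Ω, ℂ))
    (ha : ∀ i, a i ∈ A) (hb : ∀ i, b i ∈ A)
    (hsum : ∀ w : Ω, ∑ i, a i w * b i w = 1)
    (hbd1 : ∀ w : Ω, ∑ i, ‖a i w * (f w : ℂ)‖ ^ 2 ≤ 1)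
    (hbd2 : ∀ w : Ω, ∑ i, ‖b i w * (f w : ℂ)⁻¹‖ ^ 2 ≤ 1) :
    MemQ A f := by
  rcases isEmpty_or_nonempty Ω with hΩ | ⟨⟨w₀⟩⟩
  · exact ⟨1, one_mem A, ⟨1, one_mem A, one_mul 1⟩, hΩ.elim⟩
  have hconj : ∀ w i, b i w = conj (a i w) * (f w : ℂ) ^ 2 := fun w i =>
    Complex.eq_conj_mul_sq_of_sum_mul_eq_one (hf w).ne' (hsum w) (hbd1 w) (hbd2 w) i
      (Finset.mem_univ i)
  choose c hc using fun i => hanti (a i * b i) (mul_mem (ha i) (hb i)) fun w => by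
    rw [ContinuousMap.mul_apply, Complex.mul_eq_ofReal_of_eq_conj_mul_sq (hconj w i),
      Complex.ofReal_im]
  obtain ⟨k, hk⟩ : ∃ k, c k ≠ 0 := by
    by_contra! hzero
    have hsum₀ := hsum w₀
    simp only [← ContinuousMap.mul_apply, hc, hzero, Finset.sum_const_zero] at hsum₀
    exact zero_ne_one hsum₀
  exact memQ_of_mul_eq_const (ha k) (hb k) hk (hc k) (by positivity) fun w =>
    Complex.norm_eq_sqrt_mul_of_eq_conj_mul_sq (hf w).le (hconj w k) (hc k w)

theorem stmt_16 {Ω : Type*} [TopologicalSpace Ω] [CompactSpace Ω] [T2Space Ω]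
    (A : Subalgebra ℂ C(Ω, ℂ))
    (hclosed : IsClosed (A : Set C(Ω, ℂ)))
    (hsep : ∀ x y : Ω, x ≠ y → ∃ a ∈ A, a x ≠ a y)
    (hanti : ∀ a ∈ A, (∀ x : Ω, (a x).im = 0) → ∃ c : ℂ, ∀ x : Ω, a x = c)
    (f : C(Ω, ℝ)) (hf : ∀ x, 0 < f x)
    (n : ℕ) (a b : Fin n → C(Ω, ℂ))
    (ha : ∀ i, a i ∈ A) (hb : ∀ i, b i ∈ A)
    (hsum : ∀ w : Ω, ∑ i, a i w * b i w = 1)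
    (hbd1 : ∀ w : Ω, ∑ i, ‖a i w * (f w : ℂ)‖ ^ 2 ≤ 1)
    (hbd2 : ∀ w : Ω, ∑ i, ‖b i w * (f w : ℂ)⁻¹‖ ^ 2 ≤ 1) :
    MemQ A f :=
  stmt_16_general A hanti f hf n a b ha hb hsum hbd1 hbd2
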